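/- arXiv:1703.01133 — 3 statements merged into one kernel-verified Lean document; each statement's English description precedes it below -/
import Mathlib

section
/- Let a, b be nonzero rational numbers and d ∈ ℚ an element that is not a square in ℚ, and let K = ℚ[X]/(X² − d) be the corresponding quadratic field, with √d denoting the class of X. Then for every ℚ-algebra homomorphism φ : K → ℍ[ℚ,a,b] the quaternion φ(√d) is pure, say φ(√d) = x·i + y·j + z·k, and the assignment φ ↦ (x,y,z) is a bijection from the set of ℚ-algebra homomorphisms K → ℍ[ℚ,a,b] onto the set of representations {(x,y,z) ∈ ℚ³ : −a x² − b y² + a b z² = −d} of −d by the ternary normic form of ℍ[ℚ,a,b]. -/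
open scoped Quaternion
open Polynomial

/-!
An algebra map out of `ℚ[X]/(X² − d)` is determined by the image `q` of `√d`, which may be any
`q` with `q² = d`. Since `d` is not a square, such a `q` cannot have nonzero real part (it would
then be a scalar), and for a pure quaternion `q = x i + y j + z k` one has
`q² = a x² + b y² − a b z²`, the negative of the ternary normic form.
-/

namespace QuaternionAlgebra

variable {R : Type*}

theorem mul_self_of_re_eq_zero [CommRing R] {c₁ c₃ : R} {q : ℍ[R, c₁, 0, c₃]} (hq : q.re = 0) :
    q * q = ↑(c₁ * q.imI ^ 2 + c₃ * q.imJ ^ 2 - c₁ * c₃ * q.imK ^ 2) := by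
  ext <;> simp only [re_mul, imI_mul, imJ_mul, imK_mul, re_coe, imI_coe, imJ_coe, imK_coe, hq] <;>
    ring

/-- By Cayley–Hamilton, `q * q = q * ↑(2 * q.re) - q * star q`, so a square root of a scalar with
nonzero real part is itself a scalar. -/
theorem re_eq_zero_of_mul_self_eq_coe [Field R] [NeZero (2 : R)] {c₁ c₃ d : R}
    (hd : ¬ ∃ s : R, s ^ 2 = d) {q : ℍ[R, c₁, 0, c₃]} (h : q * q = d) : q.re = 0 := by
  have hlin : q * ↑(2 * q.re) = ↑(d + (q * star q).re) := by
    rw [coe_add, ← h, ← mul_star_eq_coe, ← mul_add, self_add_star', zero_mul, add_zero]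
  by_contra hre
  have h2re : 2 * q.re ≠ 0 := mul_ne_zero two_ne_zero hre
  have hscalar : q = ↑((d + (q * star q).re) / (2 * q.re)) := by
    calc q = q * ↑(2 * q.re) * ↑(2 * q.re)⁻¹ := by
          rw [mul_assoc, ← coe_mul, mul_inv_cancel₀ h2re, coe_one, mul_one]
      _ = _ := by rw [hlin, ← coe_mul, div_eq_mul_inv]
  rw [hscalar, ← coe_mul, coe_inj] at h
  exact hd ⟨_, (sq _).trans h⟩

end QuaternionAlgebra

namespace AdjoinRoot

variable {R A : Type*} [CommRing R] [Semiring A] [Algebra R A]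

theorem aeval_algHom_root_eq_zero {f : R[X]} (φ : AdjoinRoot f →ₐ[R] A) :
    aeval (φ (root f)) f = 0 := by
  rw [aeval_algHom_apply, aeval_eq, mk_self, map_zero]

theorem exists_algHom_root_eq {f : R[X]} {q : A} (hq : aeval q f = 0) :
    ∃ φ : AdjoinRoot f →ₐ[R] A, φ (root f) = q := by
  have hker : ∀ p ∈ Ideal.span {f}, aeval q p = 0 := fun p hp => by
    obtain ⟨c, rfl⟩ := Ideal.mem_span_singleton.mp hp
    rw [map_mul, hq, zero_mul]
  exact ⟨Ideal.Quotient.liftₐ _ (aeval q) hker,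
    (Ideal.Quotient.liftₐ_apply _ _ _ _).trans (aeval_X q)⟩

end AdjoinRoot

theorem Polynomial.aeval_X_sq_sub_C_eq_zero_iff {R A : Type*} [CommRing R] [Ring A] [Algebra R A]
    (d : R) (q : A) : aeval q (X ^ 2 - C d) = 0 ↔ q * q = algebraMap R A d := by
  rw [map_sub, map_pow, aeval_X, aeval_C, sub_eq_zero, sq]

theorem embeddings_biject_with_representations_by_ternary_normic_form_general
    (a b d : ℚ) (hd : ¬ ∃ s : ℚ, s ^ 2 = d) :
    (∀ φ : AdjoinRoot (X ^ 2 - C d) →ₐ[ℚ] ℍ[ℚ, a, b],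
        (φ (AdjoinRoot.root (X ^ 2 - C d))).re = 0) ∧
    Set.BijOn
      (fun φ : AdjoinRoot (X ^ 2 - C d) →ₐ[ℚ] ℍ[ℚ, a, b] =>
        ((φ (AdjoinRoot.root (X ^ 2 - C d))).imI,
          (φ (AdjoinRoot.root (X ^ 2 - C d))).imJ,
          (φ (AdjoinRoot.root (X ^ 2 - C d))).imK))
      Set.univ
      {v : ℚ × ℚ × ℚ | -a * v.1 ^ 2 - b * v.2.1 ^ 2 + a * b * v.2.2 ^ 2 = -d} := by
  have hsq (φ : AdjoinRoot (X ^ 2 - C d) →ₐ[ℚ] ℍ[ℚ, a, b]) :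
      φ (AdjoinRoot.root _) * φ (AdjoinRoot.root _) = (d : ℍ[ℚ, a, b]) := by
    rw [← QuaternionAlgebra.coe_algebraMap, ← aeval_X_sq_sub_C_eq_zero_iff]
    exact AdjoinRoot.aeval_algHom_root_eq_zero φ
  have hpure φ := QuaternionAlgebra.re_eq_zero_of_mul_self_eq_coe hd (hsq φ)
  refine ⟨hpure, fun φ _ => ?_, fun φ _ ψ _ h => ?_, ?_⟩
  · have h := hsq φ
    rw [QuaternionAlgebra.mul_self_of_re_eq_zero (hpure φ), QuaternionAlgebra.coe_inj] at h
    show -a * _ ^ 2 - b * _ ^ 2 + a * b * _ ^ 2 = -d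
    linear_combination -h
  · simp only [Prod.mk.injEq] at h
    exact AdjoinRoot.algHom_ext
      (QuaternionAlgebra.ext ((hpure φ).trans (hpure ψ).symm) h.1 h.2.1 h.2.2)
  · rintro ⟨x, y, z⟩ (hv : -a * x ^ 2 - b * y ^ 2 + a * b * z ^ 2 = -d)
    obtain ⟨φ, hφ⟩ := AdjoinRoot.exists_algHom_root_eq (f := X ^ 2 - C d)
      (q := (⟨0, x, y, z⟩ : ℍ[ℚ, a, b])) <| by
        rw [aeval_X_sq_sub_C_eq_zero_iff, QuaternionAlgebra.coe_algebraMap,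
          QuaternionAlgebra.mul_self_of_re_eq_zero rfl, QuaternionAlgebra.coe_inj]
        linear_combination -hv
    exact ⟨φ, trivial, by simp only [hφ]⟩

/-- Let `a, b` be nonzero rationals and `d ∈ ℚ` not a square, and let
`K = ℚ[X]/(X² − d)` with `√d` the class of `X`. Then for every `ℚ`-algebra homomorphism
`φ : K → ℍ[ℚ,a,b]` the quaternion `φ(√d) = x·i + y·j + z·k` is pure, and `φ ↦ (x,y,z)` is a
bijection from the set of `ℚ`-algebra homomorphisms `K → ℍ[ℚ,a,b]` onto the set of
representations of `−d` by the ternary normic form `−a x² − b y² + a b z²`. -/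
theorem embeddings_biject_with_representations_by_ternary_normic_form
    (a b d : ℚ) (ha : a ≠ 0) (hb : b ≠ 0) (hd : ¬ ∃ s : ℚ, s ^ 2 = d) :
    (∀ φ : AdjoinRoot (X ^ 2 - C d) →ₐ[ℚ] ℍ[ℚ, a, b],
        (φ (AdjoinRoot.root (X ^ 2 - C d))).re = 0) ∧
    Set.BijOn
      (fun φ : AdjoinRoot (X ^ 2 - C d) →ₐ[ℚ] ℍ[ℚ, a, b] =>
        ((φ (AdjoinRoot.root (X ^ 2 - C d))).imI,
          (φ (AdjoinRoot.root (X ^ 2 - C d))).imJ,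
          (φ (AdjoinRoot.root (X ^ 2 - C d))).imK))
      Set.univ
      {v : ℚ × ℚ × ℚ | -a * v.1 ^ 2 - b * v.2.1 ^ 2 + a * b * v.2.2 ^ 2 = -d} :=
  embeddings_biject_with_representations_by_ternary_normic_form_general a b d hd
end

section
/- Let a, b be nonzero rational numbers, p a prime, Φ : ℍ[ℚ,a,b] → M₂(ℚ_p) an injective ℚ-algebra homomorphism, d ∈ ℚ an element that is not a square in ℚ_p, and α, α' ∈ ℍ[ℚ,a,b] pure quaternions with α² = α'² = d·1. Then Φ(α) and Φ(α') have the same fixed points — i.e., for every nonzero vector v over an algebraic closure Ω of ℚ_p, v is an eigenvector of Φ(α) if and only if v is an eigenvector of Φ(α') — if and only if α' = α or α' = −α; that is, the corresponding embeddings of ℚ(√d) into ℍ[ℚ,a,b] coincide or are Galois conjugates of one another. -/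
open scoped Quaternion
open Matrix

/-- A 2×2 matrix over a field killing two linearly independent vectors is zero. -/
lemma aux_kills_two_indep {K : Type*} [Field K] {v w : Fin 2 → K}
    (hind : LinearIndependent K ![v, w]) (M : Matrix (Fin 2) (Fin 2) K)
    (hv : M.mulVec v = 0) (hw : M.mulVec w = 0) : M = 0 := by
  have hrange : Set.range ![v, w] = {v, w} := by
    ext x; simp [Fin.exists_fin_two]; tauto
  have hsp : Submodule.span K ({v, w} : Set (Fin 2 → K)) = ⊤ := by
    apply Submodule.eq_top_of_finrank_eq
    have h1 := finrank_span_eq_card hind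
    rw [hrange] at h1
    rw [h1]
    simp [Module.finrank_fin_fun]
  have hall : ∀ u : Fin 2 → K, M.mulVec u = 0 := by
    intro u
    have hu : u ∈ Submodule.span K ({v, w} : Set (Fin 2 → K)) := hsp ▸ Submodule.mem_top
    obtain ⟨x, y, hxy⟩ := Submodule.mem_span_pair.mp hu
    rw [← hxy, Matrix.mulVec_add, Matrix.mulVec_smul, Matrix.mulVec_smul, hv, hw]
    simp
  ext i j
  have := congrFun (hall (Pi.single j 1)) i
  simpa using this

lemma aux_same_eig {K : Type*} [Field K] [CharZero K] (s : K) (hs : s ≠ 0)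
    (A A' : Matrix (Fin 2) (Fin 2) K)
    (hA : A * A = (s * s) • 1) (hA' : A' * A' = (s * s) • 1)
    (hAsc : ∀ c : K, c * c = s * s → A ≠ c • 1)
    (hA'sc : ∀ c : K, c * c = s * s → A' ≠ c • 1)
    (h : ∀ v : Fin 2 → K, v ≠ 0 → (∃ c : K, A.mulVec v = c • v) → ∃ c : K, A'.mulVec v = c • v) :
    A' = A ∨ A' = -A := by
  have key : (A - s • 1) * (A + s • 1) = 0 := by
    have hAC : A * (s • 1) = s • A := by rw [Matrix.mul_smul, Matrix.mul_one]
    have hCA : (s • 1) * A = s • A := by rw [Matrix.smul_mul, Matrix.one_mul]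
    have hCC : (s • 1) * (s • 1) = (s * s) • (1 : Matrix (Fin 2) (Fin 2) K) := by
      rw [Matrix.smul_mul, Matrix.one_mul, smul_smul]
    rw [Matrix.sub_mul, Matrix.mul_add, Matrix.mul_add, hAC, hCA, hCC, hA]
    abel
  have hne1 : A - s • 1 ≠ 0 := fun h0 => hAsc s rfl (by rwa [sub_eq_zero] at h0)
  have hne2 : A + s • 1 ≠ 0 := by
    intro h0
    have hA2 : A = (-s) • 1 := by rw [neg_smul]; rwa [add_eq_zero_iff_eq_neg] at h0
    exact hAsc (-s) (by ring) hA2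
  have hdet2 : (A + s • 1).det = 0 := by
    by_contra hdet
    apply hne1
    have h1 : (A - s • 1) * ((A + s • 1) * (A + s • 1)⁻¹) = A - s • 1 := by
      rw [Matrix.mul_nonsing_inv _ (isUnit_iff_ne_zero.mpr hdet), Matrix.mul_one]
    rw [← h1, ← Matrix.mul_assoc, key, Matrix.zero_mul]
  have hdet1 : (A - s • 1).det = 0 := by
    by_contra hdet
    apply hne2
    have h1 : ((A - s • 1)⁻¹ * (A - s • 1)) * (A + s • 1) = A + s • 1 := by
      rw [Matrix.nonsing_inv_mul _ (isUnit_iff_ne_zero.mpr hdet), Matrix.one_mul]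
    rw [← h1, Matrix.mul_assoc, key, Matrix.mul_zero]
  obtain ⟨v, hv0, hv⟩ := (Matrix.exists_mulVec_eq_zero_iff).mpr hdet1
  obtain ⟨w, hw0, hw⟩ := (Matrix.exists_mulVec_eq_zero_iff).mpr hdet2
  have hAv : A.mulVec v = s • v := by
    rw [Matrix.sub_mulVec, Matrix.smul_mulVec, Matrix.one_mulVec, sub_eq_zero] at hv
    exact hv
  have hAw : A.mulVec w = (-s) • w := by
    rw [Matrix.add_mulVec, Matrix.smul_mulVec, Matrix.one_mulVec,
      add_eq_zero_iff_eq_neg] at hw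
    rw [hw, neg_smul]
  have htwo : (-s : K) - s ≠ 0 := by
    intro hh
    apply hs
    have h2 : (2 : K) * s = 0 := by linear_combination -hh
    rcases mul_eq_zero.mp h2 with h | h
    · exact absurd h two_ne_zero
    · exact h
  have hind : LinearIndependent K ![v, w] := by
    rw [LinearIndependent.pair_iff]
    intro x y hxy
    have hw2 : (A - s • 1).mulVec w = ((-s) - s) • w := by
      rw [Matrix.sub_mulVec, Matrix.smul_mulVec, Matrix.one_mulVec, hAw, ← sub_smul]
    have h7 : x • ((A - s • 1).mulVec v) + y • ((A - s • 1).mulVec w) = 0 := by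
      rw [← Matrix.mulVec_smul, ← Matrix.mulVec_smul, ← Matrix.mulVec_add, hxy,
        Matrix.mulVec_zero]
    rw [hv, hw2, smul_zero, zero_add, smul_smul] at h7
    have hy : y = 0 := by
      rcases smul_eq_zero.mp h7 with h | h
      · rcases mul_eq_zero.mp h with h | h
        · exact h
        · exact absurd h htwo
      · exact absurd h hw0
    subst hy
    refine ⟨?_, rfl⟩
    rw [zero_smul, add_zero] at hxy
    rcases smul_eq_zero.mp hxy with h | h
    · exact h
    · exact absurd h hv0
  obtain ⟨c, hc⟩ := h v hv0 ⟨s, hAv⟩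
  obtain ⟨c', hc'⟩ := h w hw0 ⟨-s, hAw⟩
  have sq_eig : ∀ (u : Fin 2 → K) (e : K), u ≠ 0 → A'.mulVec u = e • u → e * e = s * s := by
    intro u e hu0 he
    have h1 : A'.mulVec (A'.mulVec u) = (e * e) • u := by
      rw [he, Matrix.mulVec_smul, he, smul_smul]
    have h2 : A'.mulVec (A'.mulVec u) = (s * s) • u := by
      rw [Matrix.mulVec_mulVec, hA', Matrix.smul_mulVec, Matrix.one_mulVec]
    have h3 : (e * e - s * s) • u = 0 := by
      rw [sub_smul, h1.symm.trans h2, ← h2, h1, sub_self]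
    rcases smul_eq_zero.mp h3 with h | h
    · exact sub_eq_zero.mp h
    · exact absurd h hu0
  have hcsq : c * c = s * s := sq_eig v c hv0 hc
  have hc'sq : c' * c' = s * s := sq_eig w c' hw0 hc'
  have hcpm : c = s ∨ c = -s := by
    have h0 : (c - s) * (c + s) = 0 := by linear_combination hcsq
    rcases mul_eq_zero.mp h0 with h | h
    · exact Or.inl (sub_eq_zero.mp h)
    · exact Or.inr (eq_neg_of_add_eq_zero_left h)
  have hc'pm : c' = s ∨ c' = -s := by
    have h0 : (c' - s) * (c' + s) = 0 := by linear_combination hc'sq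
    rcases mul_eq_zero.mp h0 with h | h
    · exact Or.inl (sub_eq_zero.mp h)
    · exact Or.inr (eq_neg_of_add_eq_zero_left h)
  rcases hcpm with hcv | hcv <;> rcases hc'pm with hcw | hcw
  · -- c = s, c' = s : A' scalar, contradiction
    exfalso
    have m1 : (A' - s • 1).mulVec v = 0 := by
      rw [Matrix.sub_mulVec, Matrix.smul_mulVec, Matrix.one_mulVec, hc, hcv, sub_self]
    have m2 : (A' - s • 1).mulVec w = 0 := by
      rw [Matrix.sub_mulVec, Matrix.smul_mulVec, Matrix.one_mulVec, hc', hcw, sub_self]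
    have h0 := aux_kills_two_indep hind _ m1 m2
    exact hA'sc s rfl (by rwa [sub_eq_zero] at h0)
  · -- c = s, c' = -s : A' = A
    left
    have m1 : (A' - A).mulVec v = 0 := by
      rw [Matrix.sub_mulVec, hc, hAv, hcv, sub_self]
    have m2 : (A' - A).mulVec w = 0 := by
      rw [Matrix.sub_mulVec, hc', hAw, hcw, sub_self]
    have h0 := aux_kills_two_indep hind _ m1 m2
    rwa [sub_eq_zero] at h0
  · -- c = -s, c' = s : A' = -A
    right
    have m1 : (A' + A).mulVec v = 0 := by
      rw [Matrix.add_mulVec, hc, hAv, hcv, neg_smul, neg_add_cancel]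
    have m2 : (A' + A).mulVec w = 0 := by
      rw [Matrix.add_mulVec, hc', hAw, hcw, neg_smul, add_neg_cancel]
    have h0 := aux_kills_two_indep hind _ m1 m2
    rw [add_eq_zero_iff_eq_neg] at h0
    exact h0
  · -- c = -s, c' = -s : A' scalar, contradiction
    exfalso
    have m1 : (A' + s • 1).mulVec v = 0 := by
      rw [Matrix.add_mulVec, Matrix.smul_mulVec, Matrix.one_mulVec, hc, hcv, neg_smul,
        neg_add_cancel]
    have m2 : (A' + s • 1).mulVec w = 0 := by
      rw [Matrix.add_mulVec, Matrix.smul_mulVec, Matrix.one_mulVec, hc', hcw, neg_smul,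
        neg_add_cancel]
    have h0 := aux_kills_two_indep hind _ m1 m2
    have hA2 : A' = (-s) • 1 := by rw [neg_smul]; rwa [add_eq_zero_iff_eq_neg] at h0
    exact hA'sc (-s) (by ring) hA2

/-- Let `Φ : ℍ[ℚ,a,b] → M₂(ℚ_p)` be an injective `ℚ`-algebra homomorphism,
`d ∈ ℚ` not a square in `ℚ_p`, and `α, α'` pure quaternions with `α² = α'² = d·1`. Then
`Φ(α)` and `Φ(α')` have the same fixed points (the same eigenvector lines over an algebraic
closure of `ℚ_p`) if and only if `α' = α` or `α' = −α`: the corresponding embeddings of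
`ℚ(√d)` coincide or are Galois conjugate. -/
theorem same_fixed_points_iff_equal_or_conjugate_embedding
    (p : ℕ) [Fact p.Prime] (a b : ℚ) (ha : a ≠ 0) (hb : b ≠ 0)
    (Φ : ℍ[ℚ, a, b] →ₐ[ℚ] Matrix (Fin 2) (Fin 2) ℚ_[p])
    (hΦ : Function.Injective Φ)
    (d : ℚ) (hd : ¬ ∃ s : ℚ_[p], s ^ 2 = (d : ℚ_[p]))
    (α α' : ℍ[ℚ, a, b]) (hα0 : α.re = 0) (hα'0 : α'.re = 0)
    (hα : α ^ 2 = (d : ℍ[ℚ, a, b])) (hα' : α' ^ 2 = (d : ℍ[ℚ, a, b])) :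
    (∀ v : Fin 2 → AlgebraicClosure ℚ_[p], v ≠ 0 →
        ((∃ c : AlgebraicClosure ℚ_[p],
            ((Φ α).map (algebraMap ℚ_[p] (AlgebraicClosure ℚ_[p]))).mulVec v = c • v) ↔
          (∃ c : AlgebraicClosure ℚ_[p],
            ((Φ α').map (algebraMap ℚ_[p] (AlgebraicClosure ℚ_[p]))).mulVec v = c • v))) ↔
      (α' = α ∨ α' = -α) := by
  have hf : Function.Injective (algebraMap ℚ_[p] (AlgebraicClosure ℚ_[p])) :=
    (algebraMap ℚ_[p] (AlgebraicClosure ℚ_[p])).injective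
  haveI : CharZero (AlgebraicClosure ℚ_[p]) := charZero_of_injective_algebraMap hf
  set f := algebraMap ℚ_[p] (AlgebraicClosure ℚ_[p]) with hfdef
  have hd0 : (d : ℚ_[p]) ≠ 0 := fun h0 => hd ⟨0, by rw [h0]; ring⟩
  obtain ⟨s, hs2⟩ := IsAlgClosed.exists_pow_nat_eq (f (d : ℚ_[p])) (n := 2) (by norm_num)
  have hs2' : s * s = f (d : ℚ_[p]) := by rw [← hs2]; ring
  have hs0 : s ≠ 0 := fun h0 => hd0 (hf (by rw [map_zero, ← hs2', h0, mul_zero]))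
  -- squares
  have himg : ∀ β : ℍ[ℚ, a, b], β ^ 2 = (d : ℍ[ℚ, a, b]) →
      ((Φ β).map f) * ((Φ β).map f) = (s * s) • (1 : Matrix (Fin 2) (Fin 2)
        (AlgebraicClosure ℚ_[p])) := by
    intro β hβ
    have h1 : Φ β * Φ β = algebraMap ℚ _ d := by
      rw [← _root_.map_mul, ← sq, hβ, ← QuaternionAlgebra.coe_algebraMap, Φ.commutes]
    rw [← Matrix.map_mul, h1]
    ext i j
    rw [Matrix.map_apply, Matrix.algebraMap_matrix_apply, Matrix.smul_apply, Matrix.one_apply]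
    split_ifs with hij
    · rw [smul_eq_mul, mul_one, hs2', eq_ratCast (algebraMap ℚ ℚ_[p]) d]
    · rw [map_zero, smul_zero]
  -- non-scalarity
  have hnsc : ∀ β : ℍ[ℚ, a, b], ∀ c : AlgebraicClosure ℚ_[p],
      c * c = s * s → (Φ β).map f ≠ c • 1 := by
    intro β c hcc heq
    have hcval : f ((Φ β) 0 0) = c := by
      have h0 := congrFun (congrFun heq 0) 0
      rw [Matrix.map_apply, Matrix.smul_apply, Matrix.one_apply_eq, smul_eq_mul, mul_one] at h0
      exact h0
    apply hd
    refine ⟨(Φ β) 0 0, hf ?_⟩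
    rw [map_pow, hcval, sq, hcc, hs2']
  constructor
  · intro hsame
    have h1 := aux_same_eig s hs0 ((Φ α).map f) ((Φ α').map f) (himg α hα) (himg α' hα')
      (hnsc α) (hnsc α') (fun v hv0 hev => (hsame v hv0).mp hev)
    have hmapinj : Function.Injective fun M : Matrix (Fin 2) (Fin 2) ℚ_[p] => M.map f :=
      Matrix.map_injective hf
    rcases h1 with h1 | h1
    · left
      exact hΦ (hmapinj h1)
    · right
      apply hΦ
      apply hmapinj
      show (Φ α').map f = (Φ (-α)).map f
      rw [map_neg, h1]
      ext i j
      simp [Matrix.map_apply]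
  · rintro (rfl | rfl)
    · intro v hv
      rfl
    · intro v hv
      have hneg : (Φ (-α)).map f = -((Φ α).map f) := by
        rw [map_neg]
        ext i j
        simp [Matrix.map_apply]
      constructor
      · rintro ⟨c, hc⟩
        exact ⟨-c, by rw [hneg, Matrix.neg_mulVec, hc, neg_smul]⟩
      · rintro ⟨c, hc⟩
        rw [hneg, Matrix.neg_mulVec, neg_eq_iff_eq_neg] at hc
        exact ⟨-c, by rw [hc, neg_smul]⟩
end

section
/- Let p be an odd prime, let ℤ[1/p] = {q ∈ ℚ : p^n·q ∈ ℤ for some n ∈ ℕ}, and let O[1/p] be the Hurwitz order over ℤ[1/p] in ℍ[ℚ,−1,−1], i.e., O[1/p] = {w + xi + yj + zk : 2w, 2x, 2y, 2z ∈ ℤ[1/p] and 2w ≡ 2x ≡ 2y ≡ 2z (mod 2ℤ[1/p])}. Let m be a positive integer and d a negative integer, and set N := m²·d. Then every ω ∈ O[1/p] with ω² = N·1 is a pure quaternion ω = x·i + y·j + z·k, and the assignment ω ↦ (x,y,z) is a bijection from {ω ∈ O[1/p] : ω² = N·1} onto {(x,y,z) ∈ ℤ[1/p]³ : x² + y² +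 z² = −N}. (Via ω = φ(m√d), the first set parametrizes the ℤ[1/p]-algebra embeddings of the quadratic order ℤ[1/p][m√d] into O[1/p], so embeddings correspond to ℤ[1/p]-representations of −m²d by the ternary form X² + Y² + Z².) -/
/-!
A quaternion satisfies `ω² = tr(ω)·ω − Nm(ω)`. If `ω²` is a negative rational, then
`tr(ω)·ω` is rational, so either `tr(ω) = 0` or `ω` is itself rational; the latter is
impossible since rational squares are nonnegative. So `ω` is pure, `ω² = −Nm(ω) = −(x² + y² + z²)`, and for a pure quaternion the
Hurwitz congruences `2w ≡ 2x ≡ 2y ≡ 2z` reduce to `x, y, z ∈ ℤ[1/p]`.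
-/

open scoped Quaternion

/-- `zinv p q` says that the rational number `q` belongs to
`ℤ[1/p] = {q ∈ ℚ : p^n·q ∈ ℤ for some n ∈ ℕ}`. -/
def zinv (p : ℕ) (q : ℚ) : Prop :=
  ∃ (n : ℕ) (m : ℤ), (p : ℚ) ^ n * q = (m : ℚ)

/-- Membership in the Hurwitz order over `ℤ[1/p]` inside `ℍ[ℚ,−1,−1]`:
`O[1/p] = {w + xi + yj + zk : 2w, 2x, 2y, 2z ∈ ℤ[1/p], 2w ≡ 2x ≡ 2y ≡ 2z (mod 2ℤ[1/p])}`. -/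
def hurwitzMem (p : ℕ) (α : ℍ[ℚ, -1, -1]) : Prop :=
  zinv p (2 * α.re) ∧ zinv p (2 * α.imI) ∧ zinv p (2 * α.imJ) ∧ zinv p (2 * α.imK) ∧
    zinv p (α.re - α.imI) ∧ zinv p (α.re - α.imJ) ∧ zinv p (α.re - α.imK)

namespace Quaternion

variable {R : Type*}

theorem sq_eq_two_re_mul_sub_normSq [CommRing R] (a : ℍ[R]) :
    a ^ 2 = ((2 * a.re : R) : ℍ[R]) * a - ((normSq a : R) : ℍ[R]) := by
  rw [← self_add_star', ← star_mul_self, sq, add_mul, add_sub_cancel_right]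

variable [CommRing R] [LinearOrder R] [IsStrictOrderedRing R] {a : ℍ[R]} {c : R}

theorem re_eq_zero_of_sq_eq_coe_of_neg (hc : c < 0) (h : a ^ 2 = c) : a.re = 0 := by
  by_contra hre
  have hreal : (2 * a.re) • a = ((c + normSq a : R) : ℍ[R]) := by
    rw [← coe_mul_eq_smul, coe_add, ← h, sq_eq_two_re_mul_sub_normSq, sub_add_cancel]
  have him : (2 * a.re) • a.im = 0 := by
    simpa only [im_smul, im_coe] using congrArg Quaternion.im hreal
  have ha : a = a.re := by
    rw [smul_eq_zero, or_iff_right (by simpa using hre)] at him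
    rw [← re_add_im a, him, add_zero, re_coe]
  have : c = a.re ^ 2 := by
    rw [ha, ← coe_pow] at h
    exact (coe_injective h).symm
  nlinarith [sq_nonneg a.re]

theorem sq_eq_coe_iff_of_neg (hc : c < 0) :
    a ^ 2 = c ↔ a.re = 0 ∧ a.imI ^ 2 + a.imJ ^ 2 + a.imK ^ 2 = -c := by
  constructor
  · intro h
    have hre := re_eq_zero_of_sq_eq_coe_of_neg hc h
    rw [sq_eq_neg_normSq.2 hre, ← coe_neg, coe_inj, normSq_def', hre] at h
    exact ⟨hre, by linear_combination -h⟩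
  · rintro ⟨hre, hsum⟩
    rw [sq_eq_neg_normSq.2 hre, ← coe_neg, normSq_def', hre]
    congr 1
    linear_combination -hsum

end Quaternion

section HurwitzOrder

variable {p : ℕ} {q : ℚ}

theorem zinv_zero : zinv p 0 := ⟨0, 0, by simp⟩

theorem zinv_neg_iff : zinv p (-q) ↔ zinv p q := by
  suffices ∀ q, zinv p q → zinv p (-q) from ⟨fun h => neg_neg q ▸ this _ h, this q⟩
  rintro q ⟨n, k, hk⟩
  exact ⟨n, -k, by push_cast; linarith⟩

theorem zinv_two_mul (h : zinv p q) : zinv p (2 * q) := by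
  obtain ⟨n, k, hk⟩ := h
  exact ⟨n, 2 * k, by push_cast; linarith⟩

theorem hurwitzMem_iff_of_re_eq_zero {ω : ℍ[ℚ, -1, -1]} (hre : ω.re = 0) :
    hurwitzMem p ω ↔ zinv p ω.imI ∧ zinv p ω.imJ ∧ zinv p ω.imK := by
  simp only [hurwitzMem, hre, mul_zero, zero_sub, zinv_neg_iff]
  constructor
  · rintro ⟨-, -, -, -, hx, hy, hz⟩
    exact ⟨hx, hy, hz⟩
  · rintro ⟨hx, hy, hz⟩
    exact ⟨zinv_zero, zinv_two_mul hx, zinv_two_mul hy, zinv_two_mul hz, hx, hy, hz⟩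

end HurwitzOrder

theorem hurwitz_square_roots_biject_with_ternary_representations_general
    (p : ℕ)
    (m : ℕ) (hm : 0 < m) (d : ℤ) (hd : d < 0) (N : ℤ) (hN : N = (m : ℤ) ^ 2 * d) :
    (∀ ω : ℍ[ℚ, -1, -1], hurwitzMem p ω →
        ω ^ 2 = ((N : ℚ) : ℍ[ℚ, -1, -1]) → ω.re = 0) ∧
    Set.BijOn (fun ω : ℍ[ℚ, -1, -1] => (ω.imI, ω.imJ, ω.imK))
      {ω : ℍ[ℚ, -1, -1] | hurwitzMem p ω ∧ ω ^ 2 = ((N : ℚ) : ℍ[ℚ, -1, -1])}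
      {v : ℚ × ℚ × ℚ | zinv p v.1 ∧ zinv p v.2.1 ∧ zinv p v.2.2 ∧
        v.1 ^ 2 + v.2.1 ^ 2 + v.2.2 ^ 2 = -(N : ℚ)} := by
  have hNneg : (N : ℚ) < 0 := by
    rw [hN]
    exact_mod_cast mul_neg_of_pos_of_neg (by positivity) hd
  have hsq (ω : ℍ[ℚ, -1, -1]) := Quaternion.sq_eq_coe_iff_of_neg (a := ω) hNneg
  refine ⟨fun ω _ h => ((hsq ω).1 h).1, ?_, ?_, ?_⟩
  · rintro ω ⟨hω, hω2⟩
    obtain ⟨hre, hsum⟩ := (hsq ω).1 hω2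
    obtain ⟨hx, hy, hz⟩ := (hurwitzMem_iff_of_re_eq_zero hre).1 hω
    exact ⟨hx, hy, hz, hsum⟩
  · rintro ω ⟨-, hω2⟩ ω' ⟨-, hω'2⟩ heq
    obtain ⟨hx, hy, hz⟩ : ω.imI = ω'.imI ∧ ω.imJ = ω'.imJ ∧ ω.imK = ω'.imK := by
      simpa only [Prod.mk.injEq] using heq
    exact QuaternionAlgebra.ext (((hsq ω).1 hω2).1.trans ((hsq ω').1 hω'2).1.symm) hx hy hz
  · rintro ⟨x, y, z⟩ ⟨hx, hy, hz, hsum⟩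
    have hmem : hurwitzMem p ⟨0, x, y, z⟩ := (hurwitzMem_iff_of_re_eq_zero rfl).2 ⟨hx, hy, hz⟩
    exact ⟨⟨0, x, y, z⟩, ⟨hmem, (hsq _).2 ⟨rfl, hsum⟩⟩, rfl⟩

/-- Let `p` be an odd prime, `O[1/p]` the Hurwitz order over `ℤ[1/p]` in
`ℍ[ℚ,−1,−1]`, `m` a positive integer, `d` a negative integer, and `N = m²·d`. Then every
`ω ∈ O[1/p]` with `ω² = N·1` is a pure quaternion `ω = x·i + y·j + z·k`, and `ω ↦ (x,y,z)`
is a bijection from `{ω ∈ O[1/p] : ω² = N·1}` onto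
`{(x,y,z) ∈ ℤ[1/p]³ : x² + y² + z² = −N}`; thus embeddings of the quadratic order
`ℤ[1/p][m√d]` into `O[1/p]` correspond to `ℤ[1/p]`-representations of `−m²d` by
`X² + Y² + Z²`. -/
theorem hurwitz_square_roots_biject_with_ternary_representations
    (p : ℕ) [Fact p.Prime] (hodd : p ≠ 2)
    (m : ℕ) (hm : 0 < m) (d : ℤ) (hd : d < 0) (N : ℤ) (hN : N = (m : ℤ) ^ 2 * d) :
    (∀ ω : ℍ[ℚ, -1, -1], hurwitzMem p ω →
        ω ^ 2 = ((N : ℚ) : ℍ[ℚ, -1, -1]) → ω.re = 0) ∧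
    Set.BijOn (fun ω : ℍ[ℚ, -1, -1] => (ω.imI, ω.imJ, ω.imK))
      {ω : ℍ[ℚ, -1, -1] | hurwitzMem p ω ∧ ω ^ 2 = ((N : ℚ) : ℍ[ℚ, -1, -1])}
      {v : ℚ × ℚ × ℚ | zinv p v.1 ∧ zinv p v.2.1 ∧ zinv p v.2.2 ∧
        v.1 ^ 2 + v.2.1 ^ 2 + v.2.2 ^ 2 = -(N : ℚ)} :=
  hurwitz_square_roots_biject_with_ternary_representations_general p m hm d hd N hN
end
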